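/- A subset Y of X is small if and only if for every p ∈ X^# and every r ≥ 0, p̆ ≠ Δ_p(B(Y,r)), i.e., there exists an ultrafilter parallel to p not containing B(Y,r). -/

import Mathlib

/-!
`Y` is small iff every `B(Y,r)` has large complement. If `B(Y,r)ᶜ` is large, pushing `p` forward
along a map of bounded displacement into `B(Y,r)ᶜ` gives `q ∥ p` with `B(Y,r) ∉ q`. Otherwise
`B(Y,r)` is thick, so the sets `{x | B(x,t) ⊆ B(Y,r)}` are unbounded and decreasing in `t`; an
ultrafilter `p ∈ X^#` containing all of them has `B(Y,r) ⊇ B({x | B(x,t) ⊆ B(Y,r)}, t) ∈ q` for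
every `q ∥ p`.
-/

open Metric Bornology Set

variable {X : Type*} [MetricSpace X]

/-- `B(A,r) = ⋃_{a∈A} B(a,r)` where `B(a,r)` is the closed ball of radius `r`. -/
def ballU (A : Set X) (r : ℝ) : Set X := ⋃ a ∈ A, Metric.closedBall a r

/-- `X^#`: the set of ultrafilters on `X` all of whose members are unbounded. -/
def sharp (X : Type*) [MetricSpace X] : Set (Ultrafilter X) :=
  {p | ∀ P ∈ p, ¬ Bornology.IsBounded P}

/-- Parallelity: `p ∥ q` iff there is `r ≥ 0` with `B(Q,r) ∈ p` for every `Q ∈ q`. -/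
def Par (p q : Ultrafilter X) : Prop :=
  ∃ r : ℝ, 0 ≤ r ∧ ∀ Q ∈ q, ballU Q r ∈ p

/-- `p̆ = {q ∈ X^# : q ∥ p}`. -/
def pbreve (p : Ultrafilter X) : Set (Ultrafilter X) :=
  {q | q ∈ sharp X ∧ Par q p}

/-- The `p`-companion `Δ_p(Y) = {q ∈ X^# : Y ∈ q, q ∥ p}`. -/
def Delta (p : Ultrafilter X) (Y : Set X) : Set (Ultrafilter X) :=
  {q | q ∈ sharp X ∧ Y ∈ q ∧ Par q p}

/-- A set `S ⊆ X^#` is invariant if `p ∈ S`, `q ∈ X^#`, `q ∥ p` imply `q ∈ S`. -/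
def Invt (S : Set (Ultrafilter X)) : Prop :=
  ∀ p ∈ S, ∀ q, q ∈ sharp X → Par q p → q ∈ S

/-- `Y` is large if `X = B(Y,r)` for some `r ≥ 0`. -/
def Large (Y : Set X) : Prop := ∃ r : ℝ, 0 ≤ r ∧ ballU Y r = Set.univ

/-- `Y` is thick if for every `r ≥ 0` there is `y ∈ Y` with `B(y,r) ⊆ Y`. -/
def Thick (Y : Set X) : Prop := ∀ r : ℝ, 0 ≤ r → ∃ y ∈ Y, Metric.closedBall y r ⊆ Y

/-- `Y` is prethick if `B(Y,r)` is thick for some `r ≥ 0`. -/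
def Prethick (Y : Set X) : Prop := ∃ r : ℝ, 0 ≤ r ∧ Thick (ballU Y r)

/-- `Y` is small if `(X∖Y) ∩ L` is large for every large `L`. -/
def SmallSet (Y : Set X) : Prop := ∀ L : Set X, Large L → Large (Yᶜ ∩ L)

/-- `Y` is thin if for each `r ≥ 0` there is a bounded `V` with
`B(y,r) ∩ Y = {y}` for all `y ∈ Y∖V`. -/
def Thin (Y : Set X) : Prop :=
  ∀ r : ℝ, 0 ≤ r → ∃ V : Set X, Bornology.IsBounded V ∧
    ∀ y ∈ Y \ V, Metric.closedBall y r ∩ Y = {y}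

/-- `Y` is `n`-thin if for each `r ≥ 0` there is a bounded `V` with
`|B(y,r) ∩ Y| ≤ n` for all `y ∈ Y∖V`. -/
def NThin (n : ℕ) (Y : Set X) : Prop :=
  ∀ r : ℝ, 0 ≤ r → ∃ V : Set X, Bornology.IsBounded V ∧
    ∀ y ∈ Y \ V, (Metric.closedBall y r ∩ Y).encard ≤ n

/-- `M` is a minimal nonempty closed invariant subset of `X^#`
(closures/closedness taken in the Stone topology on ultrafilters). -/
def MinCI (M : Set (Ultrafilter X)) : Prop :=
  M ⊆ sharp X ∧ M.Nonempty ∧ IsClosed M ∧ Invt M ∧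
    ∀ S ⊆ M, S.Nonempty → IsClosed S → Invt S → S = M

lemma mem_ballU {A : Set X} {r : ℝ} {x : X} : x ∈ ballU A r ↔ ∃ a ∈ A, dist x a ≤ r := by
  simp [ballU, mem_closedBall]

lemma subset_ballU {A : Set X} {r : ℝ} (hr : 0 ≤ r) : A ⊆ ballU A r := fun x hx =>
  mem_ballU.2 ⟨x, hx, by simpa using hr⟩

lemma ballU_mono {A B : Set X} (h : A ⊆ B) (r : ℝ) : ballU A r ⊆ ballU B r := fun x hx => by
  obtain ⟨a, ha, hxa⟩ := mem_ballU.1 hx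
  exact mem_ballU.2 ⟨a, h ha, hxa⟩

lemma ballU_ballU_subset (A : Set X) (s t : ℝ) : ballU (ballU A s) t ⊆ ballU A (t + s) :=
  fun x hx => by
    obtain ⟨y, hy, hxy⟩ := mem_ballU.1 hx
    obtain ⟨a, ha, hya⟩ := mem_ballU.1 hy
    exact mem_ballU.2 ⟨a, ha, (dist_triangle x y a).trans (add_le_add hxy hya)⟩

lemma Bornology.IsBounded.ballU {Q : Set X} (h : IsBounded Q) (t : ℝ) : IsBounded (ballU Q t) := by
  rcases Q.eq_empty_or_nonempty with rfl | ⟨x₀, -⟩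
  · simp [_root_.ballU]
  obtain ⟨R, hR⟩ := (isBounded_iff_subset_closedBall x₀).1 h
  refine (isBounded_closedBall (x := x₀) (r := t + R)).subset fun z hz => ?_
  obtain ⟨a, ha, hza⟩ := mem_ballU.1 hz
  exact (dist_triangle z a x₀).trans (add_le_add hza (hR ha))

lemma Large.of_subset_ballU {A B : Set X} {s : ℝ} (hA : Large A) (hs : 0 ≤ s)
    (h : A ⊆ ballU B s) : Large B := by
  obtain ⟨r, hr, hAr⟩ := hA
  refine ⟨r + s, by positivity, eq_univ_of_univ_subset ?_⟩
  rw [← hAr]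
  exact (ballU_mono h r).trans (ballU_ballU_subset B s r)

lemma smallSet_iff_large_compl_ballU (Y : Set X) :
    SmallSet Y ↔ ∀ r : ℝ, 0 ≤ r → Large (ballU Y r)ᶜ := by
  constructor
  · intro hY r hr
    have hL : Large (Y ∪ (ballU Y r)ᶜ) := by
      refine ⟨r, hr, eq_univ_of_univ_subset fun x _ => ?_⟩
      by_cases hx : x ∈ ballU Y r
      · exact ballU_mono subset_union_left r hx
      · exact subset_ballU hr (Or.inr hx)
    have hcompl : Yᶜ ∩ (Y ∪ (ballU Y r)ᶜ) = (ballU Y r)ᶜ := by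
      rw [inter_union_distrib_left, compl_inter_self, empty_union, inter_eq_right,
        compl_subset_compl]
      exact subset_ballU hr
    simpa only [hcompl] using hY _ hL
  · rintro hY L ⟨t, ht, hLt⟩
    refine (hY t ht).of_subset_ballU ht fun z hz => ?_
    obtain ⟨y, hy, hzy⟩ := mem_ballU.1 (hLt ▸ mem_univ z : z ∈ ballU L t)
    exact mem_ballU.2 ⟨y, ⟨fun hyY => hz (mem_ballU.2 ⟨y, hyY, hzy⟩), hy⟩, hzy⟩

lemma mem_sharp_of_le_cobounded {p : Ultrafilter X} (h : ↑p ≤ cobounded X) : p ∈ sharp X :=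
  fun _ hP hPb => Ultrafilter.compl_mem_iff_notMem.1 (h (isBounded_def.1 hPb)) hP

lemma exists_mem_pbreve_of_large {p : Ultrafilter X} (hp : p ∈ sharp X) {L : Set X}
    (hL : Large L) : ∃ q ∈ pbreve p, L ∈ q := by
  obtain ⟨t, ht, hLt⟩ := hL
  have hc : ∀ x, ∃ y ∈ L, dist y x ≤ t := fun x => by
    obtain ⟨y, hy, hxy⟩ := mem_ballU.1 (hLt ▸ mem_univ x : x ∈ ballU L t)
    exact ⟨y, hy, by rwa [dist_comm]⟩
  choose c hcL hc using hc
  refine ⟨p.map c, ⟨fun Q hQ hQb => hp _ hQ ((hQb.ballU t).subset fun x hx => ?_), ?_⟩, ?_⟩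
  · exact mem_ballU.2 ⟨c x, hx, by rw [dist_comm]; exact hc x⟩
  · exact ⟨t, ht, fun P hP => Ultrafilter.mem_map.2 <|
      Filter.mem_of_superset hP fun x hx => mem_ballU.2 ⟨x, hx, hc x⟩⟩
  · exact Ultrafilter.mem_map.2 <| Filter.mem_of_superset Filter.univ_mem fun x _ => hcL x

def ballInterior (A : Set X) (t : ℝ) : Set X := {x | closedBall x t ⊆ A}

lemma ballInterior_antitone (A : Set X) : Antitone (ballInterior A) :=
  fun _ _ hst _ hx => (closedBall_subset_closedBall hst).trans hx

lemma ballU_ballInterior_subset (A : Set X) (t : ℝ) : ballU (ballInterior A t) t ⊆ A :=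
  fun z hz => by
    obtain ⟨x, hx, hzx⟩ := mem_ballU.1 hz
    exact hx (mem_closedBall.2 hzx)

lemma thick_of_not_large_compl {A : Set X} (h : ¬ Large Aᶜ) : Thick A := by
  intro t ht
  by_contra! hno
  refine h ⟨t, ht, eq_univ_of_univ_subset fun x _ => ?_⟩
  by_cases hxA : x ∈ A
  · obtain ⟨y, hxy, hyA⟩ := not_subset.1 (hno x hxA)
    exact mem_ballU.2 ⟨y, hyA, by rw [dist_comm]; exact hxy⟩
  · exact subset_ballU ht hxA

/-- If `A` is thick but some `ballInterior A s` were bounded, every point of `X` would lie in a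
ball inside `A` centred near that bounded set, so `A = X` and `ballInterior A s = X`. -/
lemma not_isBounded_ballInterior (hX : ¬ IsBounded (univ : Set X)) {A : Set X} (hA : Thick A)
    (s : ℝ) : ¬ IsBounded (ballInterior A s) := by
  intro hb
  obtain ⟨x₀, -, hx₀⟩ := hA (max s 0) (le_max_right _ _)
  have hx₀s : x₀ ∈ ballInterior A s := ballInterior_antitone A (le_max_left _ _) hx₀
  obtain ⟨R, hR⟩ := (isBounded_iff_subset_closedBall x₀).1 hb
  have hR0 : 0 ≤ R := dist_nonneg.trans (hR hx₀s)
  have hAuniv : A = univ := eq_univ_of_forall fun y => by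
    obtain ⟨z, -, hz⟩ := hA (max s 0 + R + dist y x₀) (by positivity)
    have hzs : z ∈ ballInterior A s :=
      ballInterior_antitone A (by linarith [le_max_left s 0, dist_nonneg (x := y) (y := x₀)]) hz
    refine hz (mem_closedBall.2 ?_)
    calc dist y z ≤ dist y x₀ + dist z x₀ := dist_triangle_right y z x₀
      _ ≤ max s 0 + R + dist y x₀ := by linarith [mem_closedBall.1 (hR hzs), le_max_right s 0]
  exact hX (by simpa [ballInterior, hAuniv] using hb)

lemma exists_mem_sharp_forall_mem {ι : Type*} [Preorder ι] [IsDirectedOrder ι] [Nonempty ι]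
    {T : ι → Set X} (hT : Antitone T) (hunb : ∀ i, ¬ IsBounded (T i)) :
    ∃ p ∈ sharp X, ∀ i, T i ∈ p := by
  set F := (⨅ i, Filter.principal (T i)) ⊓ cobounded X
  have : F.NeBot :=
    (Filter.hasBasis_iInf_principal hT.directed_ge).inf_neBot_iff.2 fun i _ C hC => by
      by_contra hdisj
      exact hunb i <| isBounded_def.2 <|
        Filter.mem_of_superset hC fun x hxC hxT => hdisj ⟨x, hxT, hxC⟩
  refine ⟨Ultrafilter.of F, mem_sharp_of_le_cobounded ((Ultrafilter.of_le F).trans inf_le_right),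
    fun i => Ultrafilter.of_le F (Filter.mem_inf_of_left ?_)⟩
  exact Filter.mem_iInf_of_mem i (Filter.mem_principal_self _)

lemma exists_mem_sharp_pbreve_subset_delta (hX : ¬ IsBounded (univ : Set X)) {A : Set X}
    (hA : Thick A) : ∃ p ∈ sharp X, pbreve p ⊆ Delta p A := by
  obtain ⟨p, hp, hpA⟩ :=
    exists_mem_sharp_forall_mem (ballInterior_antitone A) (not_isBounded_ballInterior hX hA)
  refine ⟨p, hp, fun q ⟨hq, t, ht, hqp⟩ => ⟨hq, ?_, t, ht, hqp⟩⟩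
  exact Filter.mem_of_superset (hqp _ (hpA t)) (ballU_ballInterior_subset A t)

theorem stmt10 (hX : ¬ Bornology.IsBounded (Set.univ : Set X)) (Y : Set X) :
    SmallSet Y ↔ ∀ p ∈ sharp X, ∀ r : ℝ, 0 ≤ r → pbreve p ≠ Delta p (ballU Y r) := by
  rw [smallSet_iff_large_compl_ballU]
  constructor
  · intro hY p hp r hr heq
    obtain ⟨q, hq, hqY⟩ := exists_mem_pbreve_of_large hp (hY r hr)
    exact Ultrafilter.compl_mem_iff_notMem.1 hqY (heq ▸ hq).2.1
  · intro h r hr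
    by_contra hY
    obtain ⟨p, hp, hsub⟩ := exists_mem_sharp_pbreve_subset_delta hX (thick_of_not_large_compl hY)
    exact h p hp r hr (hsub.antisymm fun q hq => ⟨hq.1, hq.2.2⟩)
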